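/- arXiv:2309.16044 — 2 statements merged into one kernel-verified Lean document; each statement's English description precedes it below -/
import Mathlib

section
/- Let ε > 0, α > 1/2, and 0 < h' ≤ h. Set k = 2h, z = ((12α + 4)/(2α − 1))·h², k' = 2h', z' = ((12α + 4)/(2α − 1))·h'². Then for all V ≥ 0 and all S ≥ −h': φ(V + z + k·S, S) ≤ φ(V + z' + k'·S, S). (Both first arguments are positive on this range.) -/
open MeasureTheory intervalIntegral

/-- The imaginary error function, `erfi x = ∫ u in 0..x, exp (u²)`
(the conventional erfi scaled by `√π / 2`). -/
noncomputable def erfi (x : ℝ) : ℝ := ∫ u in (0:ℝ)..x, Real.exp (u ^ 2)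

/-- The potential function `φ(x, y) = ε·√(α·x)·(2·∫₀^{y/√(4αx)} erfi(u) du − 1)`. -/
noncomputable def phi (ε α x y : ℝ) : ℝ :=
  ε * Real.sqrt (α * x) *
    (2 * (∫ u in (0:ℝ)..(y / Real.sqrt (4 * α * x)), erfi u) - 1)

/-- `F w = ∫₀^w erfi`. -/
noncomputable def erfiInt (w : ℝ) : ℝ := ∫ u in (0:ℝ)..w, erfi u

lemma exp_sq_intInt (a b : ℝ) :
    IntervalIntegrable (fun u : ℝ => Real.exp (u ^ 2)) volume a b :=
  (Real.continuous_exp.comp (continuous_pow 2)).intervalIntegrable a b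

lemma erfi_continuous : Continuous erfi :=
  intervalIntegral.continuous_primitive exp_sq_intInt 0

lemma erfi_mono : Monotone erfi := by
  intro a b hab
  have key : erfi a + ∫ u in a..b, Real.exp (u ^ 2) = erfi b :=
    intervalIntegral.integral_add_adjacent_intervals (exp_sq_intInt 0 a) (exp_sq_intInt a b)
  have h0 : 0 ≤ ∫ u in a..b, Real.exp (u ^ 2) :=
    intervalIntegral.integral_nonneg hab (fun u _ => (Real.exp_pos _).le)
  linarith

/-- Pointwise comparison integrated: `∫₀^w erfi v dv ≤ ∫₀^w erfi (v/λ) dv` for `0 < λ ≤ 1`. -/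
lemma integral_erfi_le (lam w : ℝ) (h0 : 0 < lam) (h1 : lam ≤ 1) :
    (∫ v in (0:ℝ)..w, erfi v) ≤ ∫ v in (0:ℝ)..w, erfi (v / lam) := by
  have hi1 : ∀ a b : ℝ, IntervalIntegrable (fun v => erfi v) volume a b :=
    fun a b => erfi_continuous.intervalIntegrable a b
  have hi2 : ∀ a b : ℝ, IntervalIntegrable (fun v => erfi (v / lam)) volume a b :=
    fun a b => (erfi_continuous.comp (continuous_id.div_const lam)).intervalIntegrable a b
  rcases le_or_gt 0 w with hw | hw
  · refine intervalIntegral.integral_mono_on hw (hi1 0 w) (hi2 0 w) ?_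
    intro x hx
    have hxx : x ≤ x / lam := by
      rw [le_div_iff₀ h0]
      nlinarith [hx.1]
    exact erfi_mono hxx
  · rw [intervalIntegral.integral_symm, intervalIntegral.integral_symm (f := fun v => erfi (v / lam))]
    have : (∫ v in w..(0:ℝ), erfi (v / lam)) ≤ ∫ v in w..(0:ℝ), erfi v := by
      refine intervalIntegral.integral_mono_on hw.le (hi2 w 0) (hi1 w 0) ?_
      intro x hx
      have hxx : x / lam ≤ x := by
        rw [div_le_iff₀ h0]
        nlinarith [hx.2]
      exact erfi_mono hxx
    linarith

/-- Key scaling inequality: for `0 < λ ≤ 1`, `2F(w) − 1 ≤ λ(2F(w/λ) − 1)`. -/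
lemma key_scaling (lam w : ℝ) (h0 : 0 < lam) (h1 : lam ≤ 1) :
    2 * erfiInt w - 1 ≤ lam * (2 * erfiInt (w / lam) - 1) := by
  have hcv : (∫ v in (0:ℝ)..w, erfi (v / lam)) = lam * erfiInt (w / lam) := by
    rw [intervalIntegral.integral_comp_div (fun v => erfi v) (ne_of_gt h0)]
    simp [erfiInt, smul_eq_mul]
  have h := integral_erfi_le lam w h0 h1
  rw [hcv] at h
  have : erfiInt w ≤ lam * erfiInt (w / lam) := h
  nlinarith

/-- Monotonicity in the scale: for `0 < p ≤ q`, `q(2F(c/q)−1) ≤ p(2F(c/p)−1)`. -/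
lemma scale_mono (p q c : ℝ) (hp : 0 < p) (hpq : p ≤ q) :
    q * (2 * erfiInt (c / q) - 1) ≤ p * (2 * erfiInt (c / p) - 1) := by
  have hq : 0 < q := lt_of_lt_of_le hp hpq
  have hlam0 : 0 < p / q := div_pos hp hq
  have hlam1 : p / q ≤ 1 := (div_le_one hq).2 hpq
  have h := key_scaling (p / q) (c / q) hlam0 hlam1
  have hdiv : c / q / (p / q) = c / p := by
    field_simp
  rw [hdiv] at h
  have := mul_le_mul_of_nonneg_left h hq.le
  calc q * (2 * erfiInt (c / q) - 1) ≤ q * (p / q * (2 * erfiInt (c / p) - 1)) := this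
    _ = p * (2 * erfiInt (c / p) - 1) := by field_simp

/-- `phi` rewritten via `erfiInt` at scale `√(αx)`. -/
lemma phi_eq (ε α x y : ℝ) (hα : 0 < α) (hx : 0 < x) :
    phi ε α x y = ε * (Real.sqrt (α * x) * (2 * erfiInt ((y / 2) / Real.sqrt (α * x)) - 1)) := by
  have hax : 0 < α * x := mul_pos hα hx
  have h4 : Real.sqrt (4 * α * x) = 2 * Real.sqrt (α * x) := by
    rw [show (4 : ℝ) * α * x = 4 * (α * x) by ring, show (4 : ℝ) = 2 ^ 2 by norm_num,
      Real.sqrt_mul (by positivity), Real.sqrt_sq (by norm_num : (0:ℝ) ≤ 2)]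
  have harg : y / Real.sqrt (4 * α * x) = (y / 2) / Real.sqrt (α * x) := by
    rw [h4]; ring
  rw [phi, harg, erfiInt]; ring

/-- Monotonicity step `Φ_t(V, S) ≤ Φ_{t−1}(V, S)` in the one-step potential bound:
with `k = 2h`, `z = ((12α+4)/(2α−1))h²`, `k' = 2h'`, `z' = ((12α+4)/(2α−1))h'²`,
one has `φ(V + z + kS, S) ≤ φ(V + z' + k'S, S)` for `V ≥ 0`, `S ≥ −h'`. -/
theorem potential_monotone_in_hint (ε α h' h : ℝ)
    (hε : 0 < ε) (hα : 1 / 2 < α) (hh' : 0 < h') (hh : h' ≤ h)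
    (V S : ℝ) (hV : 0 ≤ V) (hS : -h' ≤ S) :
    phi ε α (V + ((12 * α + 4) / (2 * α - 1)) * h ^ 2 + (2 * h) * S) S ≤
      phi ε α (V + ((12 * α + 4) / (2 * α - 1)) * h' ^ 2 + (2 * h') * S) S := by
  set C : ℝ := (12 * α + 4) / (2 * α - 1) with hCdef
  have hden : 0 < 2 * α - 1 := by linarith
  have hC2 : 2 < C := by
    rw [hCdef, lt_div_iff₀ hden]; linarith
  have hα0 : 0 < α := by linarith
  set a : ℝ := V + C * h' ^ 2 + (2 * h') * S with hadef
  set b : ℝ := V + C * h ^ 2 + (2 * h) * S with hbdef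
  have ha : 0 < a := by
    have h1 : (C - 2) * h' ^ 2 ≤ a := by
      rw [hadef]; nlinarith
    have h2 : 0 < (C - 2) * h' ^ 2 := mul_pos (by linarith) (by positivity)
    linarith
  have hab : a ≤ b := by
    have f1 : 0 ≤ C * (h + h') + 2 * S := by
      have := mul_le_mul_of_nonneg_left (show 2 * h' ≤ h + h' by linarith)
        (show (0:ℝ) ≤ C by linarith)
      nlinarith [mul_pos (show (0:ℝ) < C - 1 by linarith) hh']
    have f2 : 0 ≤ (h - h') * (C * (h + h') + 2 * S) :=
      mul_nonneg (by linarith) f1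
    rw [hadef, hbdef]
    nlinarith [f2]
  have hb : 0 < b := lt_of_lt_of_le ha hab
  rw [phi_eq ε α b S hα0 hb, phi_eq ε α a S hα0 ha]
  apply mul_le_mul_of_nonneg_left _ hε.le
  exact scale_mono (Real.sqrt (α * a)) (Real.sqrt (α * b)) (S / 2)
    (Real.sqrt_pos.2 (mul_pos hα0 ha))
    (Real.sqrt_le_sqrt (by nlinarith))
end

section
/- (One-step potential bound.) Let ε > 0, α > 1/2, and 0 < h' ≤ h. Set k = 2h, z = ((12α + 4)/(2α − 1))·h², k' = 2h', z' = ((12α + 4)/(2α − 1))·h'². Then for all V ≥ 0, all S ≥ −h', and all c with −h − min(S, 0) ≤ c ≤ h: φ(V + c² + z + k·(S + c), S + c) − φ(V + z' + k'·S, S) − c·D(V, S) ≤ 0, where D(V, S) = ε·erfi(S/√(4·α·(V + z + k·S))) − (ε·k·√α/(2·√(V + z + k·S)))·exp(S²/(4·α·(V + z + k·S))). -/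
/-- `D(V, S)`, the partial derivative in `S` of the shifted potential
`Φ(V, S) = φ(V + z + k·S, S)`. -/
noncomputable def Dfun (ε α k z V S : ℝ) : ℝ :=
  ε * erfi (S / Real.sqrt (4 * α * (V + z + k * S))) -
    ε * k * Real.sqrt α / (2 * Real.sqrt (V + z + k * S)) *
      Real.exp (S ^ 2 / (4 * α * (V + z + k * S)))

open Real Set

theorem hasDerivAt_erfi (x : ℝ) : HasDerivAt erfi (exp (x ^ 2)) x := by
  have hc : Continuous fun u : ℝ => exp (u ^ 2) := by fun_prop
  exact intervalIntegral.integral_hasDerivAt_right (hc.intervalIntegrable _ _)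
    (hc.stronglyMeasurableAtFilter _ _) hc.continuousAt

theorem differentiable_erfi : Differentiable ℝ erfi :=
  fun x => (hasDerivAt_erfi x).differentiableAt

@[simp] theorem erfi_zero : erfi 0 = 0 := intervalIntegral.integral_same

theorem integral_erfi (b : ℝ) :
    ∫ u in (0:ℝ)..b, erfi u = b * erfi b - (exp (b ^ 2) - 1) / 2 := by
  have hderiv : ∀ u ∈ uIcc 0 b,
      HasDerivAt (fun v => v * erfi v - exp (v ^ 2) / 2) (erfi u) u := by
    intro u _
    refine (((hasDerivAt_id' u).mul (hasDerivAt_erfi u)).sub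
      ((hasDerivAt_pow 2 u).exp.div_const 2)).congr_deriv ?_
    push_cast
    ring
  rw [intervalIntegral.integral_eq_sub_of_hasDerivAt hderiv
    (differentiable_erfi.continuous.intervalIntegrable _ _)]
  simp [erfi]
  ring

noncomputable def phiArg (β y x : ℝ) : ℝ := y / (2 * β * √x)

noncomputable def phiCore (β y x : ℝ) : ℝ :=
  y * erfi (phiArg β y x) - β * √x * exp (phiArg β y x ^ 2)

theorem sqrt_four_mul_mul {α : ℝ} (hα : 0 ≤ α) (x : ℝ) :
    √(4 * α * x) = 2 * √α * √x := by
  rw [sqrt_mul (by positivity), sqrt_mul (by norm_num), show (4 : ℝ) = 2 ^ 2 by norm_num,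
    sqrt_sq (by norm_num)]

theorem phi_eq_mul_phiCore (ε : ℝ) {α : ℝ} (hα : 0 ≤ α) (x y : ℝ) :
    phi ε α x y = ε * phiCore (√α) y x := by
  rw [phi, integral_erfi, sqrt_four_mul_mul hα, sqrt_mul hα, phiCore, phiArg]
  rcases eq_or_ne (√α * √x) 0 with h0 | h0
  · -- both sides vanish, the right one because `y / 0 = 0` and `erfi 0 = 0`
    simp [h0, mul_assoc]
  · obtain ⟨hα0, hx0⟩ := mul_ne_zero_iff.mp h0
    field_simp
    ring

/-- The derivative of `phiCore β` in the direction `(1, m)`. -/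
noncomputable def phiSlope (β y x m : ℝ) : ℝ :=
  erfi (phiArg β y x) - β * m * exp (phiArg β y x ^ 2) / (2 * √x)

section curves

variable {β : ℝ} {y x m : ℝ → ℝ} {y' x' t : ℝ}

theorem HasDerivAt.phiArg_comp (hβ : β ≠ 0) (hy : HasDerivAt y y' t) (hx : HasDerivAt x x' t)
    (hxt : 0 < x t) :
    HasDerivAt (fun s => phiArg β (y s) (x s))
      ((2 * x t * y' - y t * x') / (4 * β * x t * √(x t))) t := by
  have hr : 0 < √(x t) := sqrt_pos.2 hxt
  refine (hy.div ((hx.sqrt hxt.ne').const_mul (2 * β)) (by positivity)).congr_deriv ?_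
  field_simp
  rw [sq_sqrt hxt.le]
  ring

theorem HasDerivAt.phiCore_comp (hβ : β ≠ 0) (hy : HasDerivAt y y' t) (hx : HasDerivAt x x' t)
    (hxt : 0 < x t) :
    HasDerivAt (fun s => phiCore β (y s) (x s))
      (erfi (phiArg β (y t) (x t)) * y' -
        β * x' * Real.exp (phiArg β (y t) (x t) ^ 2) / (2 * √(x t))) t := by
  have hr : 0 < √(x t) := sqrt_pos.2 hxt
  have hθ := hy.phiArg_comp hβ hx hxt
  refine ((hy.mul ((hasDerivAt_erfi _).comp t hθ)).sub
    (((hx.sqrt hxt.ne').const_mul β).mul (hθ.pow 2).exp)).congr_deriv ?_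
  have hyθ : y t = 2 * β * √(x t) * phiArg β (y t) (x t) := by
    rw [phiArg]; field_simp
  simp only [Function.comp_apply, Pi.pow_apply]
  generalize phiArg β (y t) (x t) = θ at hyθ ⊢
  -- the terms carrying `θ'` cancel once `y` is written as `2β√x θ`
  rw [hyθ]
  field_simp
  ring

theorem HasDerivAt.phiSlope_comp (hβ : β ≠ 0)
    (hy : HasDerivAt y 1 t) (hx : HasDerivAt x (m t) t) (hm : HasDerivAt m 2 t)
    (hxt : 0 < x t) :
    HasDerivAt (fun s => phiSlope β (y s) (x s) (m s))
      (Real.exp (phiArg β (y t) (x t) ^ 2) *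
        ((2 * x t - m t * y t) ^ 2 - 8 * β ^ 2 * x t ^ 2 + 2 * β ^ 2 * m t ^ 2 * x t) /
        (8 * β * x t ^ 2 * √(x t))) t := by
  have hr : 0 < √(x t) := sqrt_pos.2 hxt
  have hθ := hy.phiArg_comp hβ hx hxt
  refine (((hasDerivAt_erfi _).comp t hθ).sub
    (((hm.const_mul β).mul (hθ.pow 2).exp).div ((hx.sqrt hxt.ne').const_mul 2)
      (by positivity))).congr_deriv ?_
  have hyθ : y t = 2 * β * √(x t) * phiArg β (y t) (x t) := by
    rw [phiArg]; field_simp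
  have hsq := sq_sqrt hxt.le
  simp only [Pi.pow_apply, Pi.mul_apply]
  generalize phiArg β (y t) (x t) = θ at hyθ ⊢
  rw [hyθ]
  generalize √(x t) = r at hr hsq ⊢
  generalize x t = X at hsq ⊢
  subst hsq
  field_simp
  ring

theorem HasDerivAt.phiCore_comp_phiSlope (hβ : β ≠ 0) (hy : HasDerivAt y 1 t)
    (hx : HasDerivAt x x' t) (hxt : 0 < x t) :
    HasDerivAt (fun s => phiCore β (y s) (x s)) (phiSlope β (y t) (x t) x') t := by
  simpa [phiSlope] using hy.phiCore_comp hβ hx hxt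

end curves

theorem antitoneOn_of_hasDerivAt_nonpos {D : Set ℝ} (hD : Convex ℝ D) {f f' : ℝ → ℝ}
    (hf : ∀ x ∈ D, HasDerivAt f (f' x) x) (hf' : ∀ x ∈ D, f' x ≤ 0) : AntitoneOn f D :=
  antitoneOn_of_hasDerivWithinAt_nonpos hD
    (fun x hx => (hf x hx).continuousAt.continuousWithinAt)
    (fun x hx => (hf x (interior_subset hx)).hasDerivWithinAt)
    (fun x hx => hf' x (interior_subset hx))

theorem le_add_mul_of_antitoneOn_deriv {f f' : ℝ → ℝ} {a b : ℝ}
    (hf : ∀ t ∈ uIcc a b, HasDerivAt f (f' t) t) (hf' : AntitoneOn f' (uIcc a b)) :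
    f b ≤ f a + (b - a) * f' a := by
  have hcont : ContinuousOn f (uIcc a b) := fun t ht =>
    (hf t ht).continuousAt.continuousWithinAt
  rcases lt_trichotomy a b with hab | rfl | hab
  · rw [uIcc_of_le hab.le] at hf hf' hcont
    obtain ⟨ξ, hξ, hslope⟩ := exists_hasDerivAt_eq_slope f f' hab hcont
      fun t ht => hf t (Ioo_subset_Icc_self ht)
    have : f' ξ ≤ f' a := hf' (left_mem_Icc.2 hab.le) (Ioo_subset_Icc_self hξ) hξ.1.le
    rw [eq_div_iff (sub_ne_zero.2 hab.ne')] at hslope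
    nlinarith
  · simp
  · rw [uIcc_of_ge hab.le] at hf hf' hcont
    obtain ⟨ξ, hξ, hslope⟩ := exists_hasDerivAt_eq_slope f f' hab hcont
      fun t ht => hf t (Ioo_subset_Icc_self ht)
    have : f' a ≤ f' ξ := hf' (Ioo_subset_Icc_self hξ) (right_mem_Icc.2 hab.le) hξ.2.le
    rw [eq_div_iff (sub_ne_zero.2 hab.ne')] at hslope
    nlinarith

theorem phiCore_antitoneOn {β : ℝ} (hβ : 0 < β) (y : ℝ) :
    AntitoneOn (phiCore β y) (Ioi 0) := by
  refine antitoneOn_of_hasDerivAt_nonpos (convex_Ioi 0)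
    (fun x hx => by
      simpa using (hasDerivAt_const x y).phiCore_comp hβ.ne' (hasDerivAt_id x) hx)
    fun x hx => ?_
  have := sqrt_pos.2 (mem_Ioi.1 hx)
  exact neg_nonpos.2 (by positivity)

theorem slope_numerator_nonpos {α h y m X : ℝ} (hα : 1 / 2 < α) (hh : 0 ≤ h) (hm0 : 0 ≤ m)
    (hm4 : m ≤ 4 * h) (hy : -h ≤ y)
    (hX : (12 * α + 4) / (2 * α - 1) * h ^ 2 + 2 * h * y ≤ X) :
    (2 * X - m * y) ^ 2 - 8 * α * X ^ 2 + 2 * α * m ^ 2 * X ≤ 0 := by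
  have hD : 0 < 2 * α - 1 := by linarith
  have hXD : (12 * α + 4) * h ^ 2 ≤ (X - 2 * h * y) * (2 * α - 1) := by
    rw [← div_le_iff₀ hD]
    rw [div_mul_eq_mul_div] at hX
    linarith
  have hX6 : 6 * h ^ 2 + 2 * h * y ≤ X := by nlinarith [sq_nonneg h]
  have hX4 : 4 * h ^ 2 ≤ X := by nlinarith
  have hX0 : 0 ≤ X := by nlinarith
  have hm2 : m ^ 2 ≤ 16 * h ^ 2 := by nlinarith
  have hm2X := mul_le_mul_of_nonneg_right hm2 (by positivity : 0 ≤ 2 * α * X)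
  rcases le_or_gt 0 y with hy0 | hy0
  · have hmy : m * y ≤ 2 * X := by nlinarith
    have hx0 : 8 * α * h ^ 2 ≤ X * (2 * α - 1) := by
      nlinarith [mul_nonneg (mul_nonneg hh hy0) hD.le]
    nlinarith [mul_nonneg (mul_nonneg hm0 hy0) (by linarith : 0 ≤ 2 * X - m * y),
      mul_le_mul_of_nonneg_left hx0 (by positivity : 0 ≤ 4 * X)]
  · have hmy : -(m * y) ≤ 4 * h ^ 2 := by nlinarith
    have hmy2 : (m * y) ^ 2 ≤ 16 * h ^ 4 := by
      nlinarith [mul_nonneg hm0 (by linarith : 0 ≤ -y)]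
    have hx0 : (8 * α + 6) * h ^ 2 ≤ X * (2 * α - 1) := by
      nlinarith [mul_nonneg (mul_nonneg hh (by linarith : 0 ≤ -y)) hD.le]
    nlinarith [mul_le_mul_of_nonneg_left hx0 (by positivity : 0 ≤ 4 * X),
      mul_le_mul_of_nonneg_left hmy (by positivity : 0 ≤ 4 * X),
      mul_le_mul_of_nonneg_right hX4 (by positivity : 0 ≤ 8 * h ^ 2), mul_nonneg hX0 hX0]

theorem Dfun_eq_mul_phiSlope (ε : ℝ) {α : ℝ} (hα : 0 ≤ α) (k z V S : ℝ)
    (hX : 0 ≤ V + z + k * S) :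
    Dfun ε α k z V S = ε * phiSlope (√α) S (V + z + k * S) k := by
  have hsq : S ^ 2 / (4 * α * (V + z + k * S)) = (S / (2 * √α * √(V + z + k * S))) ^ 2 := by
    rw [div_pow, mul_pow, mul_pow, sq_sqrt hα, sq_sqrt hX]
    ring
  rw [Dfun, phiSlope, phiArg, sqrt_four_mul_mul hα, hsq]
  ring

theorem phiCore_le_add_mul_phiSlope {α h z V S c : ℝ} (hα : 1 / 2 < α) (hh : 0 < h)
    (hz : (12 * α + 4) / (2 * α - 1) * h ^ 2 ≤ z) (hV : 0 ≤ V) (hS : -h ≤ S)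
    (hc : -h ≤ c) (hch : c ≤ h) (hSc : -h ≤ S + c) :
    phiCore (√α) (S + c) (V + c ^ 2 + z + 2 * h * (S + c)) ≤
      phiCore (√α) S (V + z + 2 * h * S) +
        c * phiSlope (√α) S (V + z + 2 * h * S) (2 * h) := by
  have hβ : 0 < √α := sqrt_pos.2 (by linarith)
  have hC : 6 ≤ (12 * α + 4) / (2 * α - 1) := by
    rw [le_div_iff₀ (by linarith)]; linarith
  set x : ℝ → ℝ := fun t => V + t ^ 2 + z + 2 * h * (S + t)
  have hI : ∀ t ∈ uIcc 0 c, -h ≤ t ∧ t ≤ h ∧ -h ≤ S + t := fun t ht => by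
    rcases mem_uIcc.1 ht with ⟨h1, h2⟩ | ⟨h1, h2⟩ <;>
      exact ⟨by linarith, by linarith, by linarith⟩
  have hxC : ∀ t ∈ uIcc 0 c, (12 * α + 4) / (2 * α - 1) * h ^ 2 + 2 * h * (S + t) ≤ x t :=
    fun t _ => by nlinarith [sq_nonneg t]
  have hxpos : ∀ t ∈ uIcc 0 c, 0 < x t := fun t ht => by
    nlinarith [hxC t ht, (hI t ht).2.2, hC]
  have hx' : ∀ t, HasDerivAt x (2 * t + 2 * h) t := fun t =>
    ((((hasDerivAt_pow 2 t).const_add V).add_const z).add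
      (((hasDerivAt_id' t).const_add S).const_mul (2 * h))).congr_deriv (by push_cast; ring)
  have hm' : ∀ t, HasDerivAt (fun s => 2 * s + 2 * h) 2 t := fun t =>
    (((hasDerivAt_id' t).const_mul 2).add_const (2 * h)).congr_deriv (mul_one 2)
  have hN : ∀ t ∈ uIcc 0 c, HasDerivAt (fun s => phiCore (√α) (S + s) (x s))
      (phiSlope (√α) (S + t) (x t) (2 * t + 2 * h)) t := fun t ht =>
    ((hasDerivAt_id' t).const_add S).phiCore_comp_phiSlope hβ.ne' (hx' t) (hxpos t ht)
  have hG : AntitoneOn (fun t => phiSlope (√α) (S + t) (x t) (2 * t + 2 * h)) (uIcc 0 c) := by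
    refine antitoneOn_of_hasDerivAt_nonpos (convex_uIcc 0 c) (fun t ht =>
      ((hasDerivAt_id' t).const_add S).phiSlope_comp hβ.ne' (hx' t) (hm' t) (hxpos t ht))
      fun t ht => ?_
    obtain ⟨ht₁, ht₂, ht₃⟩ := hI t ht
    have hQ := slope_numerator_nonpos hα hh.le (m := 2 * t + 2 * h) (by linarith)
      (by linarith) ht₃ (hxC t ht)
    have := sqrt_pos.2 (hxpos t ht)
    rw [sq_sqrt (by linarith)]
    exact div_nonpos_of_nonpos_of_nonneg (mul_nonpos_of_nonneg_of_nonpos (exp_pos _).le hQ)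
      (by positivity)
  simpa [x] using le_add_mul_of_antitoneOn_deriv hN hG

/-- One-step potential bound: with `k = 2h`, `z = ((12α+4)/(2α−1))h²`,
`k' = 2h'`, `z' = ((12α+4)/(2α−1))h'²`, the potentials satisfy
`Φ_t(V + c², S + c) − Φ_{t−1}(V, S) − c·∂₂Φ_t(V, S) ≤ 0`. -/
theorem one_step_potential_bound (ε α h' h : ℝ)
    (hε : 0 < ε) (hα : 1 / 2 < α) (hh' : 0 < h') (hh : h' ≤ h)
    (V S c : ℝ) (hV : 0 ≤ V) (hS : -h' ≤ S)
    (hc1 : -h - min S 0 ≤ c) (hc2 : c ≤ h) :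
    phi ε α (V + c ^ 2 + ((12 * α + 4) / (2 * α - 1)) * h ^ 2 + (2 * h) * (S + c)) (S + c)
      - phi ε α (V + ((12 * α + 4) / (2 * α - 1)) * h' ^ 2 + (2 * h') * S) S
      - c * Dfun ε α (2 * h) (((12 * α + 4) / (2 * α - 1)) * h ^ 2) V S ≤ 0 := by
  set C := (12 * α + 4) / (2 * α - 1)
  have hC : 6 ≤ C := by
    rw [le_div_iff₀ (by linarith)]; linarith
  have hX' : 0 < V + C * h' ^ 2 + 2 * h' * S := by nlinarith
  have hXX' : V + C * h' ^ 2 + 2 * h' * S ≤ V + C * h ^ 2 + 2 * h * S := by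
    nlinarith [mul_nonneg (sub_nonneg.2 hh) (by nlinarith : 0 ≤ C * (h + h') + 2 * S)]
  have hstep := phiCore_le_add_mul_phiSlope (S := S) (c := c) hα (hh'.trans_le hh) le_rfl hV
    (by linarith) (by linarith [min_le_right S 0]) hc2 (by linarith [min_le_left S 0])
  have hmono := phiCore_antitoneOn (sqrt_pos.2 (by linarith : 0 < α)) S hX'
    (hX'.trans_le hXX') hXX'
  rw [phi_eq_mul_phiCore ε (by linarith), phi_eq_mul_phiCore ε (by linarith),
    Dfun_eq_mul_phiSlope ε (by linarith) _ _ _ _ (by linarith)]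
  linarith [mul_le_mul_of_nonneg_left hstep hε.le, mul_le_mul_of_nonneg_left hmono hε.le]
end
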